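/- With the entropy of a finite poset α defined as H(α) = log₂ of the number of linear extensions of α, for any SP-expression Ψ on n variables generating order α with dual order α*, the sum H(α) + H(α*) equals log₂(n!). -/

import Mathlib

/-- Series-parallel expressions: each leaf is a distinct variable. -/
inductive SP where
  | leaf : SP
  | ser : SP → SP → SP
  | par : SP → SP → SP

/-- The set of elements (variables) of an SP-expression. -/
def SP.carrier : SP → Type
  | .leaf => Unit
  | .ser a b => a.carrier ⊕ b.carrier
  | .par a b => a.carrier ⊕ b.carrier

/-- The partial order generated by an SP-expression. -/
def SP.le : (s : SP) → s.carrier → s.carrier → Prop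
  | .leaf, _, _ => True
  | .ser a _, .inl x, .inl y => a.le x y
  | .ser _ b, .inr x, .inr y => b.le x y
  | .ser _ _, .inl _, .inr _ => True
  | .ser _ _, .inr _, .inl _ => False
  | .par a _, .inl x, .inl y => a.le x y
  | .par _ b, .inr x, .inr y => b.le x y
  | .par _ _, .inl _, .inr _ => False
  | .par _ _, .inr _, .inl _ => False

/-- Number of variables of an SP-expression. -/
def SP.size : SP → ℕ
  | .leaf => 1
  | .ser a b => a.size + b.size
  | .par a b => a.size + b.size

instance SP.fintypeCarrier : (s : SP) → Fintype s.carrier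
  | .leaf => inferInstanceAs (Fintype Unit)
  | .ser a b =>
      letI := fintypeCarrier a; letI := fintypeCarrier b
      inferInstanceAs (Fintype (a.carrier ⊕ b.carrier))
  | .par a b =>
      letI := fintypeCarrier a; letI := fintypeCarrier b
      inferInstanceAs (Fintype (a.carrier ⊕ b.carrier))

/-- Dual expression: interchange series and parallel. -/
def SP.dual : SP → SP
  | .leaf => .leaf
  | .ser a b => .par a.dual b.dual
  | .par a b => .ser a.dual b.dual

/-- The canonical identification of elements of `s` with elements of `s.dual`. -/
def SP.dualEquiv : (s : SP) → s.carrier ≃ s.dual.carrier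
  | .leaf => Equiv.refl _
  | .ser a b => Equiv.sumCongr a.dualEquiv b.dualEquiv
  | .par a b => Equiv.sumCongr a.dualEquiv b.dualEquiv

/-- Number of linear extensions of (the strict part of) relation `le` on a finite set `X`:
bijections to `{1,…,n}` strictly monotone with respect to the order. -/
noncomputable def linExtCount (X : Type) [Fintype X] (le : X → X → Prop) : ℕ :=
  Nat.card {f : X ≃ Fin (Fintype.card X) // ∀ x y : X, le x y → x ≠ y → f x < f y}

/-- Number of linear extensions of the poset generated by an SP-expression. -/
noncomputable def SP.numLE (s : SP) : ℕ := linExtCount s.carrier s.le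

/-- Entropy of a finite poset: `log₂` of its number of linear extensions. -/
noncomputable def SP.entropy (s : SP) : ℝ := Real.logb 2 s.numLE

/-!
Under series composition the number of linear extensions is the product of those of the two
components; under parallel composition the product gets an extra factor `C(m + n, m)`, the number
of ways to interleave the positions of the two components. Dualising swaps the two compositions, so
by induction `e(Ψ) · e(Ψ*) = n!`, using `C(m + n, m) · m! · n! = (m + n)!`; then take `log₂`.
-/

open Finset Function

namespace Function.Embedding

variable {α β : Type*} [Fintype α] [LinearOrder β]

omit [LinearOrder β] in
lemma card_map_univ (g : α ↪ β) : (univ.map g).card = Fintype.card α := by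
  rw [card_map, card_univ]

noncomputable def rankFun (g : α ↪ β) (x : α) : Fin (Fintype.card α) :=
  ((univ.map g).orderIsoOfFin g.card_map_univ).symm ⟨g x, mem_map_of_mem g (mem_univ x)⟩

lemma orderEmbOfFin_rankFun (g : α ↪ β) (x : α) :
    (univ.map g).orderEmbOfFin g.card_map_univ (g.rankFun x) = g x := by
  rw [rankFun, ← coe_orderIsoOfFin_apply, OrderIso.apply_symm_apply]

noncomputable def rank (g : α ↪ β) : α ≃ Fin (Fintype.card α) :=
  Equiv.ofBijective g.rankFun <| (Fintype.bijective_iff_injective_and_card _).2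
    ⟨fun x y h => g.injective <| by rw [← orderEmbOfFin_rankFun, h, orderEmbOfFin_rankFun],
      (Fintype.card_fin _).symm⟩

lemma rank_lt_rank_iff (g : α ↪ β) {x y : α} : g.rank x < g.rank y ↔ g x < g y := by
  simp only [rank, Equiv.ofBijective_apply, rankFun, OrderIso.lt_iff_lt, Subtype.mk_lt_mk]

lemma ext_of_map_univ_eq_of_rank_eq {g g' : α ↪ β} (hS : univ.map g = univ.map g')
    (hr : g.rank = g'.rank) : g = g' := by
  ext x
  have hx : g.rankFun x = g'.rankFun x := congrArg (· x) hr
  rw [← orderEmbOfFin_rankFun g, ← orderEmbOfFin_rankFun g', hx]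
  simp_rw [hS]

end Function.Embedding

lemma Equiv.map_univ_inr_eq_compl {A B γ : Type*} [Fintype A] [Fintype B] [Fintype γ]
    [DecidableEq γ] (f : A ⊕ B ≃ γ) :
    univ.map (Embedding.inr.trans f.toEmbedding) =
      (univ.map (Embedding.inl.trans f.toEmbedding))ᶜ := by
  ext i
  obtain ⟨z | z, rfl⟩ := f.surjective i <;> simp

lemma Equiv.forall_inl_lt_inr_iff {A B γ : Type*} [Fintype A] [Fintype B] [Fintype γ]
    [LinearOrder γ] (f : A ⊕ B ≃ γ) :
    (∀ x y, f (.inl x) < f (.inr y)) ↔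
      ∀ i ∈ univ.map (Embedding.inl.trans f.toEmbedding),
        ∀ j ∉ univ.map (Embedding.inl.trans f.toEmbedding), i < j := by
  simp only [← mem_compl, ← Equiv.map_univ_inr_eq_compl]
  simp

lemma Fin.card_filter_val_lt_add {m n : ℕ} : #{i : Fin (m + n) | (i : ℕ) < m} = m := by
  rw [Fin.card_filter_val_lt]; omega

lemma Fin.forall_lt_of_notMem_iff_eq_filter_val_lt {m n : ℕ} {S : Finset (Fin (m + n))}
    (hS : S.card = m) :
    (∀ i ∈ S, ∀ j ∉ S, i < j) ↔ S = ({i | (i : ℕ) < m} : Finset (Fin (m + n))) := by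
  constructor
  · intro hlt
    refine eq_of_subset_of_card_le (fun i hi => ?_) (by rw [Fin.card_filter_val_lt_add, hS])
    by_contra hi'
    -- otherwise the `n` elements of `Sᶜ` would all lie above `i ≥ m`
    have := card_le_card fun j hj => mem_Ioi.2 (hlt i hi j (mem_compl.1 hj))
    rw [card_compl, Fintype.card_fin, hS, Fin.card_Ioi] at this
    simp only [mem_filter, mem_univ, true_and] at hi'
    omega
  · rintro rfl i hi j hj
    simp only [mem_filter, mem_univ, true_and] at hi hj
    exact Fin.lt_def.2 (by omega)

section Shuffle

variable {A B : Type*} [Fintype A] [Fintype B]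

noncomputable def shuffleEquiv :
    (A ⊕ B ≃ Fin (Fintype.card A + Fintype.card B)) ≃
      {S : Finset (Fin (Fintype.card A + Fintype.card B)) // S.card = Fintype.card A} ×
        (A ≃ Fin (Fintype.card A)) × (B ≃ Fin (Fintype.card B)) :=
  Equiv.ofBijective
    (fun f => (⟨univ.map (Embedding.inl.trans f.toEmbedding), Embedding.card_map_univ _⟩,
      (Embedding.inl.trans f.toEmbedding).rank, (Embedding.inr.trans f.toEmbedding).rank)) <| by
    classical
    refine (Fintype.bijective_iff_injective_and_card _).2 ⟨fun f f' h => ?_, ?_⟩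
    · simp only [Prod.mk.injEq, Subtype.mk.injEq] at h
      obtain ⟨hS, hA, hB⟩ := h
      have hl := Embedding.ext_of_map_univ_eq_of_rank_eq hS hA
      have hr := Embedding.ext_of_map_univ_eq_of_rank_eq
        (by rw [Equiv.map_univ_inr_eq_compl, Equiv.map_univ_inr_eq_compl, hS]) hB
      refine Equiv.ext fun z => ?_
      rcases z with x | y
      · exact DFunLike.congr_fun hl x
      · exact DFunLike.congr_fun hr y
    · rw [Fintype.card_equiv (Fintype.equivFinOfCardEq Fintype.card_sum), Fintype.card_prod,
        Fintype.card_prod, Fintype.card_finset_len, Fintype.card_fin, Fintype.card_sum,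
        Fintype.card_equiv (Fintype.equivFin A), Fintype.card_equiv (Fintype.equivFin B),
        Nat.choose_symm_add, ← mul_assoc, Nat.add_choose_mul_factorial_mul_factorial]

lemma ncard_preimage_shuffleEquiv
    (s : Set {S : Finset (Fin (Fintype.card A + Fintype.card B)) // S.card = Fintype.card A})
    (ta : Set (A ≃ Fin (Fintype.card A))) (tb : Set (B ≃ Fin (Fintype.card B))) :
    (shuffleEquiv ⁻¹' (s ×ˢ ta ×ˢ tb)).ncard = s.ncard * (ta.ncard * tb.ncard) := by
  rw [Set.ncard_preimage_of_injective_subset_range shuffleEquiv.injective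
    (by simp [shuffleEquiv.surjective.range_eq]), Set.ncard_prod, Set.ncard_prod]

end Shuffle

section LinearExtensions

def linExts {X : Type*} (r : X → X → Prop) (n : ℕ) : Set (X ≃ Fin n) :=
  {f | ∀ x y, r x y → x ≠ y → f x < f y}

lemma linExtCount_eq_ncard (X : Type) [Fintype X] (r : X → X → Prop) :
    linExtCount X r = (linExts r (Fintype.card X)).ncard :=
  rfl

lemma linExtCount_of_subsingleton (X : Type) [Fintype X] [Subsingleton X] (r : X → X → Prop) :
    linExtCount X r = 1 := by
  classical
  have huniv : linExts r (Fintype.card X) = Set.univ :=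
    Set.eq_univ_of_forall fun _ x y _ hne => absurd (Subsingleton.elim x y) hne
  rw [linExtCount_eq_ncard, huniv, Set.ncard_univ, Nat.card_eq_fintype_card,
    Fintype.card_equiv (Fintype.equivFin X), Nat.factorial_eq_one]
  exact Fintype.card_le_one_iff_subsingleton.2 ‹_›

lemma Function.Embedding.rank_mem_linExts_iff {X β : Type*} [Fintype X] [LinearOrder β]
    (g : X ↪ β) (r : X → X → Prop) :
    g.rank ∈ linExts r _ ↔ ∀ x y, r x y → x ≠ y → g x < g y := by
  simp only [linExts, Set.mem_ofPred_eq, Embedding.rank_lt_rank_iff]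

variable {A B : Type*} (ra : A → A → Prop) (rb : B → B → Prop)

lemma mem_linExts_liftRel_iff {n : ℕ} (f : A ⊕ B ≃ Fin n) :
    f ∈ linExts (Sum.LiftRel ra rb) n ↔
      (∀ x y, ra x y → x ≠ y → f (.inl x) < f (.inl y)) ∧
        ∀ x y, rb x y → x ≠ y → f (.inr x) < f (.inr y) := by
  refine ⟨fun h => ⟨fun x y hr hne => h _ _ (.inl hr) (by simpa), fun x y hr hne =>
    h _ _ (.inr hr) (by simpa)⟩, ?_⟩
  rintro ⟨hA, hB⟩ _ _ (hr | hr) hne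
  · exact hA _ _ hr (by simpa using hne)
  · exact hB _ _ hr (by simpa using hne)

lemma mem_linExts_lex_iff {n : ℕ} (f : A ⊕ B ≃ Fin n) :
    f ∈ linExts (Sum.Lex ra rb) n ↔
      f ∈ linExts (Sum.LiftRel ra rb) n ∧ ∀ x y, f (.inl x) < f (.inr y) := by
  refine ⟨fun h => ⟨fun z w hr => h z w hr.lex, fun x y => h _ _ (.sep x y) (by simp)⟩, ?_⟩
  rintro ⟨hpar, hsep⟩ _ _ (hr | hr | ⟨x, y⟩) hne
  · exact hpar _ _ (.inl hr) hne
  · exact hpar _ _ (.inr hr) hne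
  · exact hsep x y

variable [Fintype A] [Fintype B]

lemma linExts_liftRel_eq_preimage :
    linExts (Sum.LiftRel ra rb) (Fintype.card A + Fintype.card B) =
      shuffleEquiv ⁻¹' (Set.univ ×ˢ linExts ra _ ×ˢ linExts rb _) := by
  ext f
  simp only [shuffleEquiv, Equiv.ofBijective_apply, Set.mem_preimage, Set.mem_prod, Set.mem_univ,
    true_and, Embedding.rank_mem_linExts_iff, mem_linExts_liftRel_iff, Embedding.trans_apply,
    Embedding.inl_apply, Embedding.inr_apply, Equiv.coe_toEmbedding]

lemma linExts_lex_eq_preimage :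
    linExts (Sum.Lex ra rb) (Fintype.card A + Fintype.card B) =
      shuffleEquiv ⁻¹' ({⟨_, Fin.card_filter_val_lt_add⟩} ×ˢ linExts ra _ ×ˢ linExts rb _) := by
  ext f
  rw [mem_linExts_lex_iff, linExts_liftRel_eq_preimage, Equiv.forall_inl_lt_inr_iff,
    Fin.forall_lt_of_notMem_iff_eq_filter_val_lt (Embedding.card_map_univ _)]
  simp only [shuffleEquiv, Equiv.ofBijective_apply, Set.mem_preimage, Set.mem_prod, Set.mem_univ,
    true_and, Set.mem_singleton_iff, Subtype.mk.injEq]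
  tauto

end LinearExtensions

section Count

variable {A B : Type} [Fintype A] [Fintype B] (ra : A → A → Prop) (rb : B → B → Prop)

theorem linExtCount_sum_liftRel :
    linExtCount (A ⊕ B) (Sum.LiftRel ra rb) =
      (Fintype.card A + Fintype.card B).choose (Fintype.card A) *
        (linExtCount A ra * linExtCount B rb) := by
  rw [linExtCount_eq_ncard, Fintype.card_sum, linExts_liftRel_eq_preimage,
    ncard_preimage_shuffleEquiv, Set.ncard_univ, Nat.card_eq_fintype_card,
    Fintype.card_finset_len, Fintype.card_fin]
  rfl

theorem linExtCount_sum_lex :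
    linExtCount (A ⊕ B) (Sum.Lex ra rb) = linExtCount A ra * linExtCount B rb := by
  rw [linExtCount_eq_ncard, Fintype.card_sum, linExts_lex_eq_preimage,
    ncard_preimage_shuffleEquiv, Set.ncard_singleton, one_mul]
  rfl

end Count

namespace SP

lemma card_carrier (s : SP) : Fintype.card s.carrier = s.size := by
  induction s with
  | leaf => rfl
  | ser a b iha ihb | par a b iha ihb =>
    exact (Fintype.card_sum (α := a.carrier) (β := b.carrier)).trans (by rw [iha, ihb]; rfl)

lemma size_dual (s : SP) : s.dual.size = s.size := by
  induction s with
  | leaf => rfl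
  | ser a b iha ihb | par a b iha ihb => simp only [dual, size, iha, ihb]

lemma le_ser (a b : SP) : (ser a b).le = Sum.Lex a.le b.le := by
  ext (x | x) (y | y) <;> simp [le]

lemma le_par (a b : SP) : (par a b).le = Sum.LiftRel a.le b.le := by
  ext (x | x) (y | y) <;> simp [le]

lemma numLE_leaf : leaf.numLE = 1 :=
  linExtCount_of_subsingleton (X := Unit) _

lemma numLE_ser (a b : SP) : (ser a b).numLE = a.numLE * b.numLE := by
  rw [numLE, le_ser]
  exact linExtCount_sum_lex a.le b.le

lemma numLE_par (a b : SP) :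
    (par a b).numLE = (a.size + b.size).choose a.size * (a.numLE * b.numLE) := by
  rw [numLE, le_par, ← card_carrier, ← card_carrier]
  exact linExtCount_sum_liftRel a.le b.le

lemma numLE_mul_numLE_dual (s : SP) : s.numLE * s.dual.numLE = s.size.factorial := by
  induction s with
  | leaf => rw [dual, numLE_leaf]; rfl
  | ser a b iha ihb =>
    rw [dual, numLE_ser, numLE_par, size_dual, size_dual, size, Nat.choose_symm_add,
      ← Nat.add_choose_mul_factorial_mul_factorial, ← iha, ← ihb]
    ring
  | par a b iha ihb =>
    rw [dual, numLE_par, numLE_ser, size, Nat.choose_symm_add,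
      ← Nat.add_choose_mul_factorial_mul_factorial, ← iha, ← ihb]
    ring

end SP

/-- Entropy conservation: for an SP-expression `Ψ` on `n` variables generating order `α`
with dual order `α*`, `H(α) + H(α*) = log₂(n!)`. -/
theorem sp_entropy_conservation (Ψ : SP) (n : ℕ) (hn : n = Ψ.size) :
    Ψ.entropy + Ψ.dual.entropy = Real.logb 2 (n.factorial) := by
  have hmul := Ψ.numLE_mul_numLE_dual
  have hne : Ψ.numLE * Ψ.dual.numLE ≠ 0 := hmul ▸ Nat.factorial_ne_zero _
  rw [SP.entropy, SP.entropy, ← Real.logb_mul (mod_cast left_ne_zero_of_mul hne)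
    (mod_cast right_ne_zero_of_mul hne), ← Nat.cast_mul, hmul, hn]
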